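/- arXiv:1102.1616 — 3 statements merged into one kernel-verified Lean document; each statement's English description precedes it below -/
import Mathlib

section
/- If x, x' ∈ [0,1) satisfy |D_n(x)| = |D_n(x')| for every n ≥ 1, then T(x) = T(x'). -/
open Set MeasureTheory ENNReal

/-- `phi x` is the distance from `x` to the nearest integer. -/
noncomputable def phi (x : ℝ) : ℝ := |x - (round x : ℤ)|

/-- The Takagi function. -/
noncomputable def T (x : ℝ) : ℝ := ∑' n : ℕ, phi (2 ^ n * x) / 2 ^ n

/-- The `n`-th binary digit of `x` (terminating expansion for dyadic rationals). -/
noncomputable def eps (n : ℕ) (x : ℝ) : ℤ := ⌊2 ^ n * x⌋ - 2 * ⌊2 ^ (n - 1) * x⌋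

/-- `D k x = ∑_{j=1}^k (-1)^{ε_j(x)}`, the excess of 0 digits over 1 digits. -/
noncomputable def D (k : ℕ) (x : ℝ) : ℤ := ∑ j ∈ Finset.Icc 1 k, (1 - 2 * eps j x)

/-- The level set of the Takagi function at level `y`. -/
def L (y : ℝ) : Set ℝ := {x | x ∈ Set.Icc (0:ℝ) 1 ∧ T x = y}

/-- `x` is a balanced dyadic rational of order `m`. -/
def BalancedOfOrder (x : ℝ) (m : ℕ) : Prop :=
  x ∈ Set.Ico (0:ℝ) 1 ∧ (∃ k : ℤ, x = (k : ℝ) / 2 ^ (2 * m)) ∧ D (2 * m) x = 0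

/-- The generation of a balanced dyadic rational of order `m`:
the number of indices `1 ≤ j ≤ 2m` with `D j x = 0`. -/
noncomputable def generation (x : ℝ) (m : ℕ) : ℕ :=
  ((Finset.Icc 1 (2 * m)).filter (fun j => D j x = 0)).card

/-- A balanced dyadic rational of order `m` is leading if `D j x ≥ 0` for all `1 ≤ j ≤ 2m`. -/
def Leading (x : ℝ) (m : ℕ) : Prop := ∀ j ∈ Finset.Icc 1 (2 * m), 0 ≤ D j x

/-- The equivalence relation whose classes are the local level sets. -/
def locSetoid : Setoid ℝ where
  r x x' := ∀ n : ℕ, 1 ≤ n → |D n x| = |D n x'|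
  iseqv := ⟨fun _ _ _ => rfl, fun h n hn => (h n hn).symm,
    fun h g n hn => (h n hn).trans (g n hn)⟩

/-- The set of local level sets contained in `L y`: the image of `L y ∩ [0,1)`
under the quotient map of `locSetoid`. -/
def locClasses (y : ℝ) : Set (Quotient locSetoid) :=
  Quotient.mk locSetoid '' (L y ∩ Set.Ico (0:ℝ) 1)

/-!
Put `t_m = frac (2ᵐ x)`, so that `t_{m+1} = 2 t_m - ε_{m+1}` and hence, for `a ∈ {0, 1}`,
`|t_{m+1} - a| = 2 |t_m - a| - [ε_{m+1} ≠ a]`. Since `φ(2ⁿ x) = |t_n - ε_{n+1}|`, telescoping with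
`a = ε_{n+1}` gives `φ(2ⁿ x) / 2ⁿ = ∑_{m ≥ n} [ε_{m+1} ≠ ε_{n+1}] / 2^{m+1}`, and exchanging the
order of summation `T(x) = ∑_m c_m / 2^{m+1}`, where `c_m` counts the `j ≤ m + 1` with
`ε_j ≠ ε_{m+1}`. Two digits differ exactly when the product of their signs `(-1)^ε` is `-1`, so
`2 c_m = m + 1 - D_{m+1}² + D_m D_{m+1}`, and `D_m D_{m+1} = |D_m| |D_{m+1}|` because consecutive
values of `D` differ by `1`. Hence `T(x)` only depends on the sequence `|D_n(x)|`.
-/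

open Finset

lemma fract_two_pow_succ_mul (m : ℕ) (x : ℝ) :
    Int.fract (2 ^ (m + 1) * x) = 2 * Int.fract (2 ^ m * x) - eps (m + 1) x := by
  simp only [Int.fract, eps, Nat.add_sub_cancel, pow_succ]
  push_cast
  ring_nf

lemma eps_succ_eq_floor (m : ℕ) (x : ℝ) : eps (m + 1) x = ⌊2 * Int.fract (2 ^ m * x)⌋ := by
  have h := fract_two_pow_succ_mul m x
  rw [eq_comm, Int.floor_eq_iff]
  constructor <;> linarith [Int.fract_nonneg (2 ^ (m + 1) * x), Int.fract_lt_one (2 ^ (m + 1) * x)]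

lemma eps_succ_eq_zero_or_one (m : ℕ) (x : ℝ) : eps (m + 1) x = 0 ∨ eps (m + 1) x = 1 := by
  have h0 := Int.fract_nonneg (2 ^ m * x)
  have h1 := Int.fract_lt_one (2 ^ m * x)
  rw [eps_succ_eq_floor, Int.floor_eq_iff, Int.floor_eq_iff]
  by_cases h : Int.fract (2 ^ m * x) < 1 / 2
  · left; constructor <;> push_cast <;> linarith
  · right; constructor <;> push_cast <;> linarith

lemma round_two_pow_mul (n : ℕ) (x : ℝ) : round (2 ^ n * x) = ⌊2 ^ n * x⌋ + eps (n + 1) x := by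
  have h := Int.floor_eq_iff.1 (eps_succ_eq_floor n x).symm
  have he : (eps (n + 1) x : ℝ) = 0 ∨ (eps (n + 1) x : ℝ) = 1 := by
    exact_mod_cast eps_succ_eq_zero_or_one n x
  rw [round_eq_iff, Set.mem_Ico]
  push_cast
  rw [← Int.self_sub_fract]
  constructor <;> rcases he with he | he <;> rw [he] at h ⊢ <;> linarith [h.1, h.2]

lemma phi_two_pow_mul (n : ℕ) (x : ℝ) :
    phi (2 ^ n * x) = |Int.fract (2 ^ n * x) - eps (n + 1) x| := by
  rw [phi, round_two_pow_mul, Int.fract]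
  push_cast
  ring_nf

lemma abs_fract_two_pow_succ_mul_sub (m : ℕ) (x : ℝ) {a : ℤ} (ha : a = 0 ∨ a = 1) :
    |Int.fract (2 ^ (m + 1) * x) - a|
      = 2 * |Int.fract (2 ^ m * x) - a| - if eps (m + 1) x = a then 0 else 1 := by
  have h := Int.floor_eq_iff.1 (eps_succ_eq_floor m x).symm
  have h0 := Int.fract_nonneg (2 ^ m * x)
  have h1 := Int.fract_lt_one (2 ^ m * x)
  rw [fract_two_pow_succ_mul]
  rcases eps_succ_eq_zero_or_one m x with he | he <;> rcases ha with rfl | rfl <;>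
    simp only [he] at h ⊢ <;> norm_num at h ⊢
  · rw [abs_of_neg (by linarith), abs_of_neg (by linarith)]; ring
  · rw [abs_of_nonneg (by linarith), abs_of_nonneg h0]
  · rw [abs_of_neg (by linarith), abs_of_neg (by linarith)]; ring

noncomputable def mismatchTerm (x : ℝ) (n m : ℕ) : ℝ :=
  if n ≤ m ∧ eps (m + 1) x ≠ eps (n + 1) x then (2 ^ (m + 1))⁻¹ else 0

lemma mismatchTerm_nonneg (x : ℝ) (n m : ℕ) : 0 ≤ mismatchTerm x n m := by
  unfold mismatchTerm; positivity

lemma hasSum_mismatchTerm (x : ℝ) (n : ℕ) :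
    HasSum (mismatchTerm x n) (phi (2 ^ n * x) / 2 ^ n) := by
  set r : ℕ → ℝ := fun m => |Int.fract (2 ^ m * x) - eps (n + 1) x| / 2 ^ m with hr
  have hstep : ∀ m, n ≤ m → mismatchTerm x n m = r m - r (m + 1) := by
    intro m hm
    simp only [hr, mismatchTerm, hm, true_and, ne_eq,
      abs_fract_two_pow_succ_mul_sub m x (eps_succ_eq_zero_or_one n x)]
    split_ifs <;> field_simp <;> ring
  have hpartial : ∀ N, n ≤ N → ∑ m ∈ range N, mismatchTerm x n m = r n - r N := by
    intro N hN
    induction N, hN using Nat.le_induction with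
    | base =>
      rw [sub_self]
      exact sum_eq_zero fun m hm => if_neg fun h => by
        simp only [Finset.mem_range] at hm; omega
    | succ N hN ih => rw [sum_range_succ, ih, hstep N hN]; ring
  have hr0 : Filter.Tendsto r Filter.atTop (nhds 0) := by
    refine squeeze_zero (fun m => by positivity) (fun m => ?_)
      (tendsto_pow_atTop_nhds_zero_of_lt_one (r := 1 / 2) (by norm_num) (by norm_num))
    have h0 := Int.fract_nonneg (2 ^ m * x)
    have h1 := Int.fract_lt_one (2 ^ m * x)
    have ha : |Int.fract (2 ^ m * x) - eps (n + 1) x| ≤ 1 := by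
      rw [abs_le]
      rcases eps_succ_eq_zero_or_one n x with ha | ha <;> rw [ha] <;> push_cast <;>
        constructor <;> linarith
    rw [hr, one_div_pow]
    exact div_le_div_of_nonneg_right ha (by positivity)
  rw [hasSum_iff_tendsto_nat_of_nonneg (mismatchTerm_nonneg x n), phi_two_pow_mul]
  have := (tendsto_const_nhds (x := r n)).sub hr0
  rw [sub_zero] at this
  exact this.congr' ((Filter.eventually_ge_atTop n).mono fun N hN => (hpartial N hN).symm)

noncomputable def mismatchCount (m : ℕ) (x : ℝ) : ℕ :=
  #{n ∈ range (m + 1) | eps (m + 1) x ≠ eps (n + 1) x}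

lemma tsum_mismatchTerm_fst (x : ℝ) (m : ℕ) :
    ∑' n, mismatchTerm x n m = mismatchCount m x / 2 ^ (m + 1) := by
  have hsupp : ∀ n ∉ range (m + 1), mismatchTerm x n m = 0 := fun n hn =>
    if_neg fun h => hn (Finset.mem_range.2 (by omega))
  rw [tsum_eq_sum hsupp]
  simp only [mismatchTerm, sum_ite, sum_const_zero, add_zero, sum_const, nsmul_eq_mul,
    mismatchCount, div_eq_mul_inv]
  congr 3
  ext n
  simp only [mem_filter, Finset.mem_range, Nat.lt_succ_iff, and_self_left]

lemma summable_phi_two_pow_mul_div (x : ℝ) : Summable fun n : ℕ => phi (2 ^ n * x) / 2 ^ n := by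
  refine Summable.of_nonneg_of_le (fun n => by unfold phi; positivity) (fun n => ?_)
    summable_geometric_two
  rw [one_div_pow]
  exact div_le_div_of_nonneg_right ((abs_sub_round _).trans (by norm_num)) (by positivity)

lemma T_eq_tsum_mismatchCount (x : ℝ) : T x = ∑' m, (mismatchCount m x : ℝ) / 2 ^ (m + 1) := by
  have hsum : Summable (Function.uncurry (mismatchTerm x)) :=
    (summable_prod_of_nonneg fun _ => mismatchTerm_nonneg x _ _).2
      ⟨fun n => (hasSum_mismatchTerm x n).summable, by
        simpa only [(hasSum_mismatchTerm x _).tsum_eq] using summable_phi_two_pow_mul_div x⟩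
  calc T x = ∑' n, ∑' m, mismatchTerm x n m :=
        tsum_congr fun n => (hasSum_mismatchTerm x n).tsum_eq.symm
    _ = ∑' m, ∑' n, mismatchTerm x n m := hsum.tsum_comm.symm
    _ = _ := tsum_congr (tsum_mismatchTerm_fst x)

lemma D_succ (m : ℕ) (x : ℝ) : D (m + 1) x = D m x + (1 - 2 * eps (m + 1) x) :=
  sum_Icc_succ_top (by omega) _

lemma D_eq_sum_range (m : ℕ) (x : ℝ) : D m x = ∑ n ∈ range m, (1 - 2 * eps (n + 1) x) := by
  induction m with
  | zero => rfl
  | succ m ih => rw [D_succ, ih, sum_range_succ]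

lemma D_mul_D_succ_nonneg (m : ℕ) (x : ℝ) : 0 ≤ D m x * D (m + 1) x := by
  rw [D_succ]
  rcases eps_succ_eq_zero_or_one m x with h | h <;> rw [h] <;>
    rcases lt_trichotomy (D m x) 0 with hD | hD | hD <;> nlinarith

lemma ite_ne_eq_one_sub_mul {a b : ℤ} (ha : a = 0 ∨ a = 1) (hb : b = 0 ∨ b = 1) :
    (if a ≠ b then 2 else 0) = 1 - (1 - 2 * a) * (1 - 2 * b) := by
  rcases ha with rfl | rfl <;> rcases hb with rfl | rfl <;> norm_num

lemma two_mul_mismatchCount (m : ℕ) (x : ℝ) :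
    2 * (mismatchCount m x : ℤ) = m + 1 - D (m + 1) x ^ 2 + |D m x| * |D (m + 1) x| := by
  have hcount : 2 * (mismatchCount m x : ℤ) = m + 1 - (1 - 2 * eps (m + 1) x) * D (m + 1) x :=
    calc 2 * (mismatchCount m x : ℤ)
        = ∑ n ∈ range (m + 1), if eps (m + 1) x ≠ eps (n + 1) x then 2 else 0 := by
          rw [mismatchCount, card_filter, Nat.cast_sum, mul_sum]
          exact sum_congr rfl fun n _ => by split_ifs <;> norm_num
      _ = ∑ n ∈ range (m + 1), (1 - (1 - 2 * eps (m + 1) x) * (1 - 2 * eps (n + 1) x)) :=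
          sum_congr rfl fun n _ =>
            ite_ne_eq_one_sub_mul (eps_succ_eq_zero_or_one m x) (eps_succ_eq_zero_or_one n x)
      _ = m + 1 - (1 - 2 * eps (m + 1) x) * D (m + 1) x := by
          rw [sum_sub_distrib, ← mul_sum, ← D_eq_sum_range]
          simp
  rw [← abs_mul, abs_of_nonneg (D_mul_D_succ_nonneg m x), hcount, D_succ]
  ring

lemma mismatchCount_eq_of_abs_D_eq {x x' : ℝ} (h : ∀ n, |D n x| = |D n x'|) (m : ℕ) :
    mismatchCount m x = mismatchCount m x' := by
  have hx := two_mul_mismatchCount m x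
  have hx' := two_mul_mismatchCount m x'
  rw [← sq_abs, h, h] at hx
  rw [← sq_abs] at hx'
  omega

theorem stmt0_general (x x' : ℝ) (h : ∀ n : ℕ, 1 ≤ n → |D n x| = |D n x'|) : T x = T x' := by
  have habs : ∀ n, |D n x| = |D n x'|
    | 0 => by simp [D]
    | n + 1 => h (n + 1) n.succ_pos
  simp only [T_eq_tsum_mismatchCount, mismatchCount_eq_of_abs_D_eq habs]

theorem stmt0 (x x' : ℝ) (hx : x ∈ Set.Ico (0:ℝ) 1) (hx' : x' ∈ Set.Ico (0:ℝ) 1)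
    (h : ∀ n : ℕ, 1 ≤ n → |D n x| = |D n x'|) : T x = T x' :=
  stmt0_general x x' h
end

section
/- Suppose y ∈ ℝ is either a dyadic rational (y = k/2^n for some integers k, n ≥ 0) or of the form y = k/4^n + (2/3)·4^{-n} for some integers n ≥ 1 and k ≥ 0. Then there are only finitely many balanced dyadic rationals x₀ ∈ B (of order m = m(x₀)) such that T(x₀) < y < T(x₀) + (2/3)·4^{-m}. -/
open Set MeasureTheory ENNReal

/-!
If `x₀` has order `m`, then `x₀ ∈ 4^{-m} ℤ`, hence `T x₀ ∈ 4^{-m} ℤ` (the terms of the series are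
dyadic of level at most `2m` and vanish from index `2m` on). The window
`T x₀ < y < T x₀ + (2/3) 4^{-m}` then forces `Int.fract (4^m y) ∈ (0, 2/3)`. For `y = k / 2^n` this
fractional part is `0` as soon as `2m ≥ n`, and for `y = (k + 2/3) / 4^n` it is `2/3` as soon as
`m ≥ n`, because `4 ≡ 1 mod 3`. So the orders are bounded, and there are only finitely many
dyadic rationals of bounded level in `[0, 1)`.
-/

lemma phi_intCast (z : ℤ) : phi z = 0 := by simp [phi]

lemma exists_phi_intCast_div_two_pow (a : ℤ) (s : ℕ) :
    ∃ b : ℤ, phi (a / 2 ^ s) = b / 2 ^ s := by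
  refine ⟨|a - round ((a : ℝ) / 2 ^ s) * 2 ^ s|, ?_⟩
  have hs : (0 : ℝ) < 2 ^ s := by positivity
  rw [phi, Int.cast_abs, eq_div_iff hs.ne', ← abs_of_pos hs, ← abs_mul, abs_of_pos hs]
  push_cast
  field_simp

lemma exists_T_intCast_div_two_pow (k : ℤ) (N : ℕ) :
    ∃ j : ℤ, T (k / 2 ^ N) = j / 2 ^ N := by
  have hvanish : ∀ n ∉ Finset.range N, phi (2 ^ n * (k / 2 ^ N)) / 2 ^ n = 0 := by
    intro n hn
    have hn : N ≤ n := by simpa using hn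
    have : (2 : ℝ) ^ n * (k / 2 ^ N) = ((k * 2 ^ (n - N) : ℤ) : ℝ) := by
      push_cast
      rw [← Nat.sub_add_cancel hn, pow_add, Nat.add_sub_cancel]
      field_simp
    rw [this, phi_intCast, zero_div]
  have hterm : ∀ n ∈ Finset.range N,
      ∃ b : ℤ, phi (2 ^ n * (k / 2 ^ N)) / 2 ^ n = b / 2 ^ N := by
    intro n hn
    obtain ⟨t, rfl⟩ := Nat.exists_eq_add_of_le (Finset.mem_range.1 hn).le
    obtain ⟨b, hb⟩ := exists_phi_intCast_div_two_pow k t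
    refine ⟨b, ?_⟩
    have hshift : (2 : ℝ) ^ n * (k / 2 ^ (n + t)) = k / 2 ^ t := by
      rw [pow_add]
      field_simp
    rw [hshift, hb, pow_add, div_div, mul_comm]
  choose! b hb using hterm
  refine ⟨∑ n ∈ Finset.range N, b n, ?_⟩
  rw [T, tsum_eq_sum hvanish, Int.cast_sum, Finset.sum_div]
  exact Finset.sum_congr rfl hb

lemma Int.fract_mem_Ioo_of_mem_Ioo {z δ : ℝ} (j : ℤ) (hδ : δ ≤ 1)
    (hz : z ∈ Ioo (j : ℝ) (j + δ)) :
    Int.fract z ∈ Ioo 0 δ := by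
  have hfloor : ⌊z⌋ = j := Int.floor_eq_iff.2 ⟨hz.1.le, by linarith [hz.2]⟩
  rw [Int.fract, hfloor]
  exact ⟨by linarith [hz.1], by linarith [hz.2]⟩

lemma fract_four_pow_mul_intCast_div_two_pow (k : ℤ) {n m : ℕ} (h : n ≤ 2 * m) :
    Int.fract (4 ^ m * (k / 2 ^ n) : ℝ) = 0 := by
  have : (4 : ℝ) ^ m * (k / 2 ^ n) = ((k * 2 ^ (2 * m - n) : ℤ) : ℝ) := by
    push_cast
    rw [show (4 : ℝ) ^ m = 2 ^ (2 * m) by rw [pow_mul]; norm_num,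
      ← Nat.sub_add_cancel h, pow_add, Nat.add_sub_cancel]
    field_simp
  rw [this, Int.fract_intCast]

lemma fract_four_pow_mul_natCast_add_two_thirds_div_four_pow (k : ℕ) {n m : ℕ} (h : n ≤ m) :
    Int.fract (4 ^ m * (k / 4 ^ n + (2 / 3) * 1 / 4 ^ n) : ℝ) = 2 / 3 := by
  obtain ⟨t, rfl⟩ := Nat.exists_eq_add_of_le h
  obtain ⟨c, hc⟩ : (3 : ℤ) ∣ 4 ^ t - 1 := by
    simpa using sub_dvd_pow_sub_pow (4 : ℤ) 1 t
  have hcR : (4 : ℝ) ^ t = 3 * c + 1 := by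
    exact_mod_cast (sub_eq_iff_eq_add.1 hc)
  have : (4 : ℝ) ^ (n + t) * (k / 4 ^ n + (2 / 3) * 1 / 4 ^ n) =
      ((4 ^ t * k + 2 * c : ℤ) : ℝ) + 2 / 3 := by
    push_cast
    rw [pow_add]
    field_simp
    linear_combination 2 * hcR
  rw [this, Int.fract_intCast_add, Int.fract_eq_self.2 ⟨by norm_num, by norm_num⟩]

lemma finite_setOf_mem_Ico_eq_intCast_div {c : ℝ} (hc : 0 < c) :
    {x : ℝ | x ∈ Ico 0 1 ∧ ∃ k : ℤ, x = k / c}.Finite := by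
  refine ((finite_Ico (0 : ℤ) ⌈c⌉).image fun k : ℤ => (k : ℝ) / c).subset ?_
  rintro x ⟨⟨hx0, hx1⟩, k, rfl⟩
  refine ⟨k, ⟨?_, ?_⟩, rfl⟩
  · exact_mod_cast (div_nonneg_iff.1 hx0).elim (·.1) fun h => absurd h.2 (not_le.2 hc)
  · exact Int.cast_lt.1 (((div_lt_one hc).1 hx1).trans_le (Int.le_ceil c))

theorem stmt13 (y : ℝ)
    (hy : (∃ (k : ℤ) (n : ℕ), y = (k : ℝ) / 2 ^ n) ∨
          (∃ (n : ℕ), 1 ≤ n ∧ ∃ k : ℕ, y = (k : ℝ) / 4 ^ n + (2/3) * (1:ℝ) / 4 ^ n)) :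
    {x₀ : ℝ | ∃ m : ℕ, BalancedOfOrder x₀ m ∧
      T x₀ < y ∧ y < T x₀ + (2/3) * (1:ℝ) / 4 ^ m}.Finite := by
  obtain ⟨M, hM⟩ : ∃ M : ℕ, ∀ m, M ≤ m → Int.fract (4 ^ m * y) ∉ Ioo 0 (2 / 3) := by
    rcases hy with ⟨k, n, rfl⟩ | ⟨n, -, k, rfl⟩
    · refine ⟨n, fun m hm => ?_⟩
      simp [fract_four_pow_mul_intCast_div_two_pow k (by omega : n ≤ 2 * m)]
    · refine ⟨n, fun m hm => ?_⟩
      rw [fract_four_pow_mul_natCast_add_two_thirds_div_four_pow k hm]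
      exact fun h => h.2.false
  refine ((finite_Iio M).biUnion fun m _ =>
    finite_setOf_mem_Ico_eq_intCast_div (by positivity : (0 : ℝ) < 2 ^ (2 * m))).subset ?_
  rintro x₀ ⟨m, ⟨hx, ⟨k, rfl⟩, -⟩, hlow, hhigh⟩
  obtain ⟨j, hj⟩ := exists_T_intCast_div_two_pow k (2 * m)
  rw [hj, show (2 : ℝ) ^ (2 * m) = 4 ^ m by rw [pow_mul]; norm_num] at hlow hhigh
  have h4 : (0 : ℝ) < 4 ^ m := by positivity
  have hy4 : 4 ^ m * y ∈ Ioo (j : ℝ) (j + 2 / 3) := by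
    rw [mul_one, ← add_div] at hhigh
    exact ⟨(div_lt_iff₀' h4).1 hlow, (lt_div_iff₀' h4).1 hhigh⟩
  have hm : m < M := not_le.1 fun hm => hM m hm (Int.fract_mem_Ioo_of_mem_Ioo j (by norm_num) hy4)
  exact mem_biUnion hm ⟨hx, k, rfl⟩
end

section
/- Let r : ℕ → ℝ be a sequence with r_n ∈ {-1, 1} for all n, and define f(x) = ∑_{n=0}^∞ (r_n/2^n)·φ(2^n x). Then the height of the graph of f over [0,1] is at most 2/3: for all x, x' ∈ [0,1], f(x) - f(x') ≤ 2/3 (equivalently, sup_{[0,1]} f - inf_{[0,1]} f ≤ 2/3). -/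
open Set MeasureTheory ENNReal

/-!
Group the series in consecutive pairs `n = 2k, 2k + 1`. With `t = 4ᵏ x` and `s = r₂ₖ r₂ₖ₊₁`,
the pair equals `r₂ₖ 4⁻ᵏ (φ(t) + s φ(2t) / 2)`, and the bracket lies in `[0, 1/2]` because
`φ(2t) ≤ 2 φ(t)` and `φ(2t) ≤ 1 - 2 φ(t)`. So each pair varies by at most `4⁻ᵏ / 2`, and
`∑ₖ 4⁻ᵏ / 2 = 2/3`.
-/

lemma phi_nonneg (x : ℝ) : 0 ≤ phi x := abs_nonneg _

lemma phi_le_half (x : ℝ) : phi x ≤ 1 / 2 := abs_sub_round x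

lemma phi_le_abs_sub_intCast (x : ℝ) (m : ℤ) : phi x ≤ |x - m| := round_le x m

lemma phi_two_mul_le (x : ℝ) : phi (2 * x) ≤ 2 * phi x := by
  calc phi (2 * x) ≤ |2 * x - ((2 * round x : ℤ) : ℝ)| := phi_le_abs_sub_intCast _ _
    _ = 2 * phi x := by
      rw [phi, Int.cast_mul, Int.cast_two, ← mul_sub, abs_mul, abs_two]

lemma phi_two_mul_le_one_sub (x : ℝ) : phi (2 * x) ≤ 1 - 2 * phi x := by
  have hx := abs_sub_round x
  rw [abs_le] at hx
  rcases le_or_gt 0 (x - round x) with hpos | hneg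
  · calc phi (2 * x) ≤ |2 * x - ((2 * round x + 1 : ℤ) : ℝ)| := phi_le_abs_sub_intCast _ _
      _ = 1 - 2 * phi x := by
        rw [phi, abs_of_nonneg hpos, abs_of_nonpos (by push_cast; linarith)]
        push_cast; ring
  · calc phi (2 * x) ≤ |2 * x - ((2 * round x - 1 : ℤ) : ℝ)| := phi_le_abs_sub_intCast _ _
      _ = 1 - 2 * phi x := by
        rw [phi, abs_of_neg hneg, abs_of_nonneg (by push_cast; linarith)]
        push_cast; ring

lemma phi_add_sign_mul_phi_two_mul_mem_Icc {s : ℝ} (hs : |s| = 1) (t : ℝ) :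
    phi t + s * phi (2 * t) / 2 ∈ Icc (0 : ℝ) (1 / 2) := by
  have := phi_nonneg (2 * t)
  have := phi_le_half t
  have := phi_two_mul_le t
  have := phi_two_mul_le_one_sub t
  rcases (abs_eq zero_le_one).1 hs with rfl | rfl <;> constructor <;> linarith

theorem Summable.hasSum_add_pairs {E : Type*} [NormedAddCommGroup E] [CompleteSpace E]
    {g : ℕ → E} (hg : Summable g) :
    HasSum (fun k => g (2 * k) + g (2 * k + 1)) (∑' n, g n) := by
  have he : Summable fun k => g (2 * k) := hg.comp_injective fun _ _ h => by omega
  have ho : Summable fun k => g (2 * k + 1) := hg.comp_injective fun _ _ h => by omega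
  rw [← tsum_even_add_odd he ho]
  exact he.hasSum.add ho.hasSum

noncomputable def signedTakagiTerm (r : ℕ → ℝ) (x : ℝ) (n : ℕ) : ℝ :=
  r n / 2 ^ n * phi (2 ^ n * x)

lemma abs_signedTakagiTerm_le {r : ℕ → ℝ} (hr : ∀ n, |r n| ≤ 1) (x : ℝ) (n : ℕ) :
    |signedTakagiTerm r x n| ≤ (1 / 2) ^ n := by
  have hphi : |phi (2 ^ n * x)| ≤ 1 := by
    rw [abs_of_nonneg (phi_nonneg _)]; linarith [phi_le_half (2 ^ n * x)]
  rw [signedTakagiTerm, abs_mul, abs_div, abs_pow, abs_two, div_pow, one_pow]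
  calc |r n| / 2 ^ n * |phi (2 ^ n * x)| ≤ 1 / 2 ^ n * 1 := by gcongr; exact hr n
    _ = 1 / 2 ^ n := mul_one _

lemma summable_signedTakagiTerm {r : ℕ → ℝ} (hr : ∀ n, |r n| ≤ 1) (x : ℝ) :
    Summable (signedTakagiTerm r x) :=
  .of_norm_bounded (summable_geometric_of_lt_one (by norm_num) (by norm_num : (1 / 2 : ℝ) < 1))
    (abs_signedTakagiTerm_le hr x)

lemma signedTakagiTerm_pair_eq {r : ℕ → ℝ} {k : ℕ} (hr : |r (2 * k)| = 1) (x : ℝ) :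
    signedTakagiTerm r x (2 * k) + signedTakagiTerm r x (2 * k + 1) =
      r (2 * k) / 4 ^ k *
        (phi (4 ^ k * x) + r (2 * k) * r (2 * k + 1) * phi (2 * (4 ^ k * x)) / 2) := by
  have h4 : (2 : ℝ) ^ (2 * k) = 4 ^ k := by rw [pow_mul]; norm_num
  have hsq : r (2 * k) * r (2 * k) = 1 := by rw [← abs_mul_abs_self, hr, one_mul]
  rw [signedTakagiTerm, signedTakagiTerm, h4,
    show (2 : ℝ) ^ (2 * k + 1) * x = 2 * (4 ^ k * x) by rw [pow_succ, h4]; ring, pow_succ, h4]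
  generalize phi (4 ^ k * x) = a
  generalize phi (2 * (4 ^ k * x)) = b
  field_simp
  linear_combination (-r (2 * k + 1) * b) * hsq

lemma signedTakagiTerm_pair_sub_le {r : ℕ → ℝ} (hr : ∀ n, |r n| = 1) (x x' : ℝ) (k : ℕ) :
    (signedTakagiTerm r x (2 * k) + signedTakagiTerm r x (2 * k + 1)) -
      (signedTakagiTerm r x' (2 * k) + signedTakagiTerm r x' (2 * k + 1)) ≤
        1 / 2 * (1 / 4) ^ k := by
  have hs : |r (2 * k) * r (2 * k + 1)| = 1 := by rw [abs_mul, hr, hr, one_mul]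
  obtain ⟨hB0, hB1⟩ := phi_add_sign_mul_phi_two_mul_mem_Icc hs (4 ^ k * x)
  obtain ⟨hB0', hB1'⟩ := phi_add_sign_mul_phi_two_mul_mem_Icc hs (4 ^ k * x')
  rw [signedTakagiTerm_pair_eq (hr _), signedTakagiTerm_pair_eq (hr _), ← mul_sub,
    div_pow, one_pow]
  refine (le_abs_self _).trans ?_
  rw [abs_mul, abs_div, abs_pow, abs_of_pos (by norm_num : (0 : ℝ) < 4), hr]
  calc (1 : ℝ) / 4 ^ k * |_| ≤ 1 / 4 ^ k * (1 / 2) := by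
        gcongr; rw [abs_le]; constructor <;> linarith
    _ = 1 / 2 * (1 / 4 ^ k) := mul_comm _ _

theorem stmt19 (r : ℕ → ℝ) (hr : ∀ n, r n = -1 ∨ r n = 1)
    (f : ℝ → ℝ) (hf : ∀ x, f x = ∑' n : ℕ, r n / 2 ^ n * phi (2 ^ n * x)) :
    ∀ x ∈ Set.Icc (0:ℝ) 1, ∀ x' ∈ Set.Icc (0:ℝ) 1, f x - f x' ≤ 2/3 := by
  intro x _ x' _
  have hr_abs (n : ℕ) : |r n| = 1 := (abs_eq zero_le_one).2 (hr n).symm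
  have hpairs (y : ℝ) :=
    (summable_signedTakagiTerm (fun n => (hr_abs n).le) y).hasSum_add_pairs
  have hgeom : HasSum (fun k : ℕ => 1 / 2 * (1 / 4 : ℝ) ^ k) (2 / 3) := by
    have h := (hasSum_geometric_of_lt_one (r := (1 / 4 : ℝ)) (by norm_num) (by norm_num)).mul_left
      (1 / 2)
    rwa [show (1 / 2 : ℝ) * (1 - 1 / 4)⁻¹ = 2 / 3 by norm_num] at h
  rw [hf, hf]
  exact hasSum_le (signedTakagiTerm_pair_sub_le hr_abs x x') ((hpairs x).sub (hpairs x')) hgeom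
end
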